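/- Let A : ℕ → ℕ be defined by A(0) = 1, A(1) = 2, and A(n) = 1 + C(A(n−2)+1, 2) + A(n−2)·(A(n−1) − A(n−2)) for n ≥ 2, for n ≥ 2 let E(n) = log(1 + 1/(2·A(n−1)) − A(n−2)/(2·A(n−1)) + 1/(A(n−1)·A(n−2))), and let φ = (1+√5)/2. Define K₂ = exp((1/√5)·(log 2 + ∑_{i=2}^{∞} E(i)·φ^{1−i})). Then 1.48369 < K₂ < 1.48370. -/

import Mathlib

def A : ℕ → ℕ
  | 0 => 1
  | 1 => 2
  | n + 2 => 1 + Nat.choose (A n + 1) 2 + A n * (A (n + 1) - A n)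

noncomputable def E (n : ℕ) : ℝ :=
  Real.log (1 + 1 / (2 * (A (n - 1) : ℝ)) - (A (n - 2) : ℝ) / (2 * (A (n - 1) : ℝ))
    + 1 / ((A (n - 1) : ℝ) * (A (n - 2) : ℝ)))

noncomputable def φ : ℝ := (1 + Real.sqrt 5) / 2

noncomputable def K₂ : ℝ :=
  Real.exp ((1 / Real.sqrt 5) *
    (Real.log 2 + ∑' i : {i : ℕ // 2 ≤ i}, E i * φ ^ (1 - (i : ℤ))))

/-!
Write `E (n + 2) = log (1 - δₙ)` with `δₙ = (Aₙ (Aₙ - 1) - 2) / (2 Aₙ Aₙ₊₁)`. The recurrence gives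
`Aₙ Aₙ₊₁ ≤ 2 Aₙ₊₂`, hence `0 ≤ δₙ₊₂ ≤ 1 / Aₙ₊₁`, so the terms of the series decay doubly
exponentially. The series is therefore its first eight terms, each evaluated through the Taylor
series of `log (1 - x)` with explicit remainder, plus a tail below `10⁻⁶`. This is precise enough:
the exponent of `K₂` lies about `2 · 10⁻⁶` below the upper end of the window allowed by the claim.
-/

open Real Finset

theorem tsum_subtype_le_eq_tsum_nat_add {α : Type*} [AddCommMonoid α] [TopologicalSpace α]
    (f : ℕ → α) (k : ℕ) : ∑' i : {i : ℕ // k ≤ i}, f i = ∑' n, f (n + k) := by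
  let g : ℕ → {i : ℕ // k ≤ i} := fun n ↦ ⟨n + k, Nat.le_add_left k n⟩
  have hg : Function.Injective g := fun m n h ↦ by simpa [g] using congrArg Subtype.val h
  exact (hg.tsum_eq (f := fun i ↦ f i) fun i _ ↦
    ⟨i - k, Subtype.ext (Nat.sub_add_cancel i.2)⟩).symm

theorem summable_and_abs_tsum_le_of_abs_le_geometric {f : ℕ → ℝ} {C r : ℝ} (hr₀ : 0 ≤ r)
    (hr₁ : r < 1) (hf : ∀ n, |f n| ≤ C * r ^ n) :
    Summable f ∧ |∑' n, f n| ≤ C / (1 - r) := by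
  have hg : HasSum (fun n ↦ C * r ^ n) (C / (1 - r)) := by
    simpa [div_eq_mul_inv] using (hasSum_geometric_of_lt_one hr₀ hr₁).mul_left C
  exact ⟨Summable.of_norm_bounded hg.summable hf, tsum_of_norm_bounded (f := f) hg hf⟩

theorem log_one_sub_mem_Icc {x : ℝ} (hx : |x| < 1) (n : ℕ) :
    log (1 - x) ∈
      Set.Icc (-(∑ i ∈ range n, x ^ (i + 1) / (i + 1)) - |x| ^ (n + 1) / (1 - |x|))
        (-(∑ i ∈ range n, x ^ (i + 1) / (i + 1)) + |x| ^ (n + 1) / (1 - |x|)) := by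
  have := abs_le.mp (abs_log_sub_add_sum_range_le hx n)
  constructor <;> linarith

theorem abs_log_one_sub_le_two_mul_abs {x : ℝ} (hx : |x| ≤ 1 / 2) :
    |log (1 - x)| ≤ 2 * |x| := by
  have h := abs_log_sub_add_sum_range_le (hx.trans_lt (by norm_num)) 0
  rw [sum_range_zero, zero_add, zero_add, pow_one] at h
  exact h.trans <| (div_le_iff₀ (by linarith)).2 (by nlinarith [abs_nonneg x])

theorem mul_mem_Icc_of_nonneg {x y a b c d : ℝ} (hx : x ∈ Set.Icc a b) (ha : 0 ≤ a)
    (hy : y ∈ Set.Icc c d) (hc : 0 ≤ c) : x * y ∈ Set.Icc (a * c) (b * d) := by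
  obtain ⟨hax, hxb⟩ := hx
  obtain ⟨hcy, hyd⟩ := hy
  constructor <;> nlinarith

theorem mul_mem_Icc_of_nonpos {x y a b c d : ℝ} (hx : x ∈ Set.Icc a b) (hb : b ≤ 0)
    (hy : y ∈ Set.Icc c d) (hc : 0 ≤ c) : x * y ∈ Set.Icc (a * d) (b * c) := by
  obtain ⟨hax, hxb⟩ := hx
  obtain ⟨hcy, hyd⟩ := hy
  constructor <;> nlinarith

theorem one_le_A : ∀ n, 1 ≤ A n
  | 0 => le_rfl
  | 1 => by decide
  | n + 2 => by rw [A]; omega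

theorem A_le_A_succ (n : ℕ) : A n ≤ A (n + 1) := by
  induction n with
  | zero => decide
  | succ m ih =>
    have hchoose : A m ≤ (A m + 1).choose 2 := by
      rw [Nat.choose_succ_succ, Nat.choose_one_right]
      exact Nat.le_add_right _ _
    have hmul : A (m + 1) - A m ≤ A m * (A (m + 1) - A m) :=
      Nat.le_mul_of_pos_left _ (one_le_A m)
    rw [A]
    omega

theorem monotone_A : Monotone A := monotone_nat_of_le_succ A_le_A_succ

theorem two_le_A_succ (n : ℕ) : 2 ≤ A (n + 1) :=
  (show 2 ≤ A 1 from le_rfl).trans (monotone_A (Nat.le_add_left 1 n))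

theorem two_mul_A_add_two (n : ℕ) :
    2 * (A (n + 2) : ℝ) = 2 + A n - A n ^ 2 + 2 * A n * A (n + 1) := by
  rw [A]
  push_cast [Nat.cast_sub (A_le_A_succ n), Nat.cast_choose_two]
  ring

theorem A_mul_A_succ_le (n : ℕ) : (A n * A (n + 1) : ℝ) ≤ 2 * A (n + 2) := by
  have hmono : (A n : ℝ) ≤ A (n + 1) := by exact_mod_cast A_le_A_succ n
  have hpos : (0 : ℝ) ≤ A n := Nat.cast_nonneg _
  nlinarith [two_mul_A_add_two n]

theorem A_small_values : A 0 = 1 ∧ A 1 = 2 ∧ A 2 = 3 ∧ A 3 = 6 ∧ A 4 = 16 ∧ A 5 = 82 ∧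
    A 6 = 1193 ∧ A 7 = 94506 ∧ A 8 = 112034631 := by
  decide +kernel

noncomputable def defect (n : ℕ) : ℝ := ((A n : ℝ) * (A n - 1) - 2) / (2 * A n * A (n + 1))

theorem E_add_two (n : ℕ) : E (n + 2) = log (1 - defect n) := by
  have h₀ : (A n : ℝ) ≠ 0 := by have := one_le_A n; positivity
  have h₁ : (A (n + 1) : ℝ) ≠ 0 := by have := one_le_A (n + 1); positivity
  rw [E, defect, Nat.add_sub_cancel, show n + 2 - 1 = n + 1 by omega]
  congr 1
  field_simp
  ring

theorem abs_defect_add_two_le (n : ℕ) : |defect (n + 2)| ≤ 1 / A (n + 1) := by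
  have ha : (2 : ℝ) ≤ A (n + 1) := by exact_mod_cast two_le_A_succ n
  have hb : (2 : ℝ) ≤ A (n + 2) := by exact_mod_cast two_le_A_succ (n + 1)
  have hc : (0 : ℝ) < A (n + 3) := by have := one_le_A (n + 3); positivity
  have hmul := A_mul_A_succ_le (n + 1)
  rw [defect, abs_of_nonneg (by apply div_nonneg <;> nlinarith),
    div_le_div_iff₀ (by positivity) (by positivity)]
  nlinarith

theorem abs_E_add_four_le (n : ℕ) : |E (n + 4)| ≤ 2 / A (n + 1) := by
  have ha : (2 : ℝ) ≤ A (n + 1) := by exact_mod_cast two_le_A_succ n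
  have hdefect := abs_defect_add_two_le n
  have hsmall : |defect (n + 2)| ≤ 1 / 2 :=
    hdefect.trans ((div_le_div_iff_of_pos_left one_pos (by positivity) two_pos).2 ha)
  rw [E_add_two]
  calc |log (1 - defect (n + 2))| ≤ 2 * |defect (n + 2)| := abs_log_one_sub_le_two_mul_abs hsmall
    _ ≤ 2 * (1 / A (n + 1)) := by gcongr
    _ = 2 / A (n + 1) := by ring

theorem sqrt_five_mem : √5 ∈ Set.Ioo 2.236067977 2.236067978 := by
  constructor <;> nlinarith [sq_sqrt (show (0 : ℝ) ≤ 5 by norm_num), sqrt_nonneg 5]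

theorem inv_phi_mem : φ⁻¹ ∈ Set.Ioo 0.6180339885 0.618033989 := by
  rw [show φ = goldenRatio from rfl, inv_goldenRatio, goldenConj]
  obtain ⟨h₁, h₂⟩ := sqrt_five_mem
  constructor <;> linarith

theorem tsum_E_mul_phi_zpow :
    ∑' i : {i : ℕ // 2 ≤ i}, E i * φ ^ (1 - (i : ℤ)) = ∑' n, E (n + 2) * φ⁻¹ ^ (n + 1) := by
  rw [tsum_subtype_le_eq_tsum_nat_add (fun i ↦ E i * φ ^ (1 - (i : ℤ)))]
  congr! 3 with n
  rw [show 1 - ((n + 2 : ℕ) : ℤ) = -((n + 1 : ℕ) : ℤ) by push_cast; ring, zpow_neg, zpow_natCast,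
    inv_pow]

theorem summable_and_abs_tsum_tail_le :
    Summable (fun m ↦ E (m + 10) * φ⁻¹ ^ (m + 9)) ∧
      |∑' m, E (m + 10) * φ⁻¹ ^ (m + 9)| ≤ 0.000001 := by
  obtain ⟨hψ₀, hψ₁⟩ := inv_phi_mem
  obtain ⟨-, -, -, -, -, -, -, hA₇, -⟩ := A_small_values
  have h := summable_and_abs_tsum_le_of_abs_le_geometric
    (f := fun m ↦ E (m + 10) * φ⁻¹ ^ (m + 9)) (C := 2 / 94506 * 0.62 ^ 9) (r := 0.62)
    (by norm_num) (by norm_num) fun m ↦ ?_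
  · exact ⟨h.1, h.2.trans (by norm_num)⟩
  have hA : (94506 : ℝ) ≤ A (m + 7) := by
    exact_mod_cast hA₇ ▸ (monotone_A (by omega) : A 7 ≤ A (m + 7))
  calc |E (m + 10) * φ⁻¹ ^ (m + 9)| = |E (m + 6 + 4)| * φ⁻¹ ^ (m + 9) := by
        rw [abs_mul, abs_pow, abs_of_pos (by linarith : (0 : ℝ) < φ⁻¹)]
    _ ≤ 2 / 94506 * 0.62 ^ (m + 9) := by
        gcongr
        · exact (abs_E_add_four_le (m + 6)).trans (by gcongr)
        · linarith
    _ = 2 / 94506 * 0.62 ^ 9 * 0.62 ^ m := by ring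

theorem sum_range_eight_mem :
    ∑ n ∈ range 8, E (n + 2) * φ⁻¹ ^ (n + 1) ∈ Set.Icc 0.1890641 0.1890643 := by
  obtain ⟨a₀, a₁, a₂, a₃, a₄, a₅, a₆, a₇, a₈⟩ := A_small_values
  have hE (k n : ℕ) (hk : |defect k| < 1) := E_add_two k ▸ log_one_sub_mem_Icc hk n
  -- the numbers of Taylor terms make every remainder smaller than `10⁻⁹`
  have e₂ := hE 0 28 (by norm_num [defect, a₀, a₁])
  have e₃ := hE 1 0 (by norm_num [defect, a₁, a₂])
  have e₄ := hE 2 9 (by norm_num [defect, a₂, a₃, abs_of_pos])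
  have e₅ := hE 3 10 (by norm_num [defect, a₃, a₄, abs_of_pos])
  have e₆ := hE 4 8 (by norm_num [defect, a₄, a₅, abs_of_pos])
  have e₇ := hE 5 5 (by norm_num [defect, a₅, a₆, abs_of_pos])
  have e₈ := hE 6 4 (by norm_num [defect, a₆, a₇, abs_of_pos])
  have e₉ := hE 7 2 (by norm_num [defect, a₇, a₈, abs_of_pos])
  norm_num [defect, a₀, a₁, a₂, a₃, a₄, a₅, a₆, a₇, a₈, sum_range_succ, abs_of_pos]
    at e₂ e₃ e₄ e₅ e₆ e₇ e₈ e₉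
  obtain ⟨hψ₀, hψ₁⟩ := inv_phi_mem
  have hψ (j : ℕ) : φ⁻¹ ^ j ∈ Set.Icc (0.6180339885 ^ j) (0.618033989 ^ j) :=
    ⟨pow_le_pow_left₀ (by norm_num) hψ₀.le j, pow_le_pow_left₀ (by linarith) hψ₁.le j⟩
  have t₂ := mul_mem_Icc_of_nonneg e₂ (by norm_num) (hψ 1) (by norm_num)
  have t₄ := mul_mem_Icc_of_nonpos e₄ (by norm_num) (hψ 3) (by norm_num)
  have t₅ := mul_mem_Icc_of_nonpos e₅ (by norm_num) (hψ 4) (by norm_num)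
  have t₆ := mul_mem_Icc_of_nonpos e₆ (by norm_num) (hψ 5) (by norm_num)
  have t₇ := mul_mem_Icc_of_nonpos e₇ (by norm_num) (hψ 6) (by norm_num)
  have t₈ := mul_mem_Icc_of_nonpos e₈ (by norm_num) (hψ 7) (by norm_num)
  have t₉ := mul_mem_Icc_of_nonpos e₉ (by norm_num) (hψ 8) (by norm_num)
  simp only [Set.mem_Icc] at t₂ t₄ t₅ t₆ t₇ t₈ t₉ ⊢
  simp only [sum_range_succ, sum_range_zero, zero_add, e₃, zero_mul, add_zero]
  constructor <;> linarith

theorem log_two_add_tsum_mem :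
    log 2 + ∑' i : {i : ℕ // 2 ≤ i}, E i * φ ^ (1 - (i : ℤ)) ∈ Set.Icc 0.882207 0.882213 := by
  obtain ⟨hsummable, htail⟩ := summable_and_abs_tsum_tail_le
  rw [tsum_E_mul_phi_zpow, ← Summable.sum_add_tsum_nat_add'
    (f := fun n ↦ E (n + 2) * φ⁻¹ ^ (n + 1)) (k := 8) hsummable]
  obtain ⟨hS₁, hS₂⟩ := sum_range_eight_mem
  obtain ⟨ht₁, ht₂⟩ := abs_le.mp htail
  have h₁ := log_two_gt_d9
  have h₂ := log_two_lt_d9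
  constructor <;> linarith

theorem K₂_exponent_mem :
    1 / √5 * (log 2 + ∑' i : {i : ℕ // 2 ≤ i}, E i * φ ^ (1 - (i : ℤ))) ∈
      Set.Icc 0.394534 0.394538 := by
  obtain ⟨hT₁, hT₂⟩ := log_two_add_tsum_mem
  obtain ⟨h₁, h₂⟩ := sqrt_five_mem
  rw [one_div_mul_eq_div, Set.mem_Icc, le_div_iff₀ (by linarith), div_le_iff₀ (by linarith)]
  constructor <;> nlinarith

theorem stmt_18 : 1.48369 < K₂ ∧ K₂ < 1.48370 := by
  obtain ⟨hy₁, hy₂⟩ := K₂_exponent_mem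
  have lower := abs_le.mp <|
    exp_bound (x := 0.394534) (by norm_num [abs_of_pos]) (n := 10) (by norm_num)
  have upper := abs_le.mp <|
    exp_bound (x := 0.394538) (by norm_num [abs_of_pos]) (n := 10) (by norm_num)
  norm_num [sum_range_succ, Nat.factorial, abs_of_pos] at lower upper
  constructor
  · calc (1.48369 : ℝ) < exp 0.394534 := by linarith
      _ ≤ K₂ := exp_le_exp.2 hy₁
  · calc K₂ ≤ exp 0.394538 := exp_le_exp.2 hy₂
      _ < 1.48370 := by linarith
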